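/- arXiv:2211.07536 — 2 statements merged into one kernel-verified Lean document; each statement's English description precedes it below -/
import Mathlib

section
/- For any symmetric traceless 2×2 matrices P and Q̄ with |P|² ≤ B²/(2C²), |Q̄|² ≤ B²/(2C²), the quantity -|（P+Q̄)/2|⁴ + (1/2)|P|⁴ + (1/2)|Q̄|⁴ is bounded above by (3B²/(4C²))·|P-Q̄|², where |·| denotes the Frobenius norm and ⟨·,·⟩ the Frobenius inner product. -/
open scoped RealInnerProductSpace

/-!
Put `u = ‖p + q‖²`, `d = ‖p - q‖²`, `a = ‖p‖²`, `b = ‖q‖²`. The parallelogram law gives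
`2(a + b) = u + d`, and `a - b = ⟪p + q, p - q⟫`, so Cauchy–Schwarz gives `(a - b)² ≤ u d`. Hence
`-u²/16 + (a² + b²)/2 = -u²/16 + ((a + b)² + (a - b)²)/4 ≤ d (6u + d)/16 ≤ (3/4)(a + b) d`,
and `a, b ≤ M` finishes the bound with constant `3M/2`.
-/

section InnerProductSpace

variable {E : Type*} [NormedAddCommGroup E] [InnerProductSpace ℝ E]

lemma real_inner_add_sub_eq_norm_sq_sub_norm_sq (p q : E) :
    ⟪p + q, p - q⟫ = ‖p‖ ^ 2 - ‖q‖ ^ 2 := by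
  rw [inner_add_left, inner_sub_right, inner_sub_right, real_inner_self_eq_norm_sq,
    real_inner_self_eq_norm_sq, real_inner_comm p q]
  ring

lemma sq_norm_sq_sub_norm_sq_le (p q : E) :
    (‖p‖ ^ 2 - ‖q‖ ^ 2) ^ 2 ≤ ‖p + q‖ ^ 2 * ‖p - q‖ ^ 2 := by
  rw [← real_inner_add_sub_eq_norm_sq_sub_norm_sq, ← mul_pow, ← sq_abs]
  exact pow_le_pow_left₀ (abs_nonneg _) (abs_real_inner_le_norm _ _) 2

lemma neg_norm_midpoint_pow_four_add_le {M : ℝ} (p q : E)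
    (hp : ‖p‖ ^ 2 ≤ M) (hq : ‖q‖ ^ 2 ≤ M) :
    -‖(2:ℝ)⁻¹ • (p + q)‖ ^ 4 + (1 / 2) * ‖p‖ ^ 4 + (1 / 2) * ‖q‖ ^ 4 ≤
      (3 / 2 * M) * ‖p - q‖ ^ 2 := by
  have hmid : ‖(2:ℝ)⁻¹ • (p + q)‖ ^ 4 = (‖p + q‖ ^ 2) ^ 2 / 16 := by
    rw [norm_smul, Real.norm_of_nonneg (by norm_num)]
    ring
  have hpar := parallelogram_law_with_norm ℝ p q
  have hcs := sq_norm_sq_sub_norm_sq_le p q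
  have hd : 0 ≤ ‖p - q‖ ^ 2 := by positivity
  have hu : 0 ≤ ‖p + q‖ ^ 2 := by positivity
  rw [hmid]
  nlinarith [mul_le_mul_of_nonneg_left hp hd, mul_le_mul_of_nonneg_left hq hd,
    mul_nonneg hu hd]

end InnerProductSpace

theorem stmt0_general (B C : ℝ)
    (p q : EuclideanSpace ℝ (Fin 2))
    (hp : ‖p‖ ^ 2 ≤ B ^ 2 / (2 * C ^ 2)) (hq : ‖q‖ ^ 2 ≤ B ^ 2 / (2 * C ^ 2)) :
    -‖(2:ℝ)⁻¹ • (p + q)‖ ^ 4 + (1 / 2) * ‖p‖ ^ 4 + (1 / 2) * ‖q‖ ^ 4 ≤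
      (3 * B ^ 2 / (4 * C ^ 2)) * ‖p - q‖ ^ 2 := by
  have hconst : 3 * B ^ 2 / (4 * C ^ 2) = 3 / 2 * (B ^ 2 / (2 * C ^ 2)) := by ring
  rw [hconst]
  exact neg_norm_midpoint_pow_four_add_le p q hp hq

/-- For p, q ∈ ℝ² with |p|², |q|² ≤ B²/(2C²),
    -|(p+q)/2|⁴ + |p|⁴/2 + |q|⁴/2 ≤ (3B²/(4C²))|p-q|². -/
theorem stmt0 (B C : ℝ) (hB : 0 < B) (hC : 0 < C)
    (p q : EuclideanSpace ℝ (Fin 2))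
    (hp : ‖p‖ ^ 2 ≤ B ^ 2 / (2 * C ^ 2)) (hq : ‖q‖ ^ 2 ≤ B ^ 2 / (2 * C ^ 2)) :
    -‖(2:ℝ)⁻¹ • (p + q)‖ ^ 4 + (1 / 2) * ‖p‖ ^ 4 + (1 / 2) * ‖q‖ ^ 4 ≤
      (3 * B ^ 2 / (4 * C ^ 2)) * ‖p - q‖ ^ 2 :=
  stmt0_general B C p q hp hq
end

section
/- Let p : V → ℝ² be a smooth solution of Δ_{xy}p + λ^{-2}∂²_z p = (|p|² - c²)p on V = E × (-h,h), and suppose ∂_z p = 0 on all of ∂V. Then η* = ∂_z p satisfies the linearized equation Δ_{xy}η + λ^{-2}∂²_z η = (|p|² - c²)η + 2(p·η)p, and the second variation Q[η*] = ∫_V |∇_{xy}η*|² + λ^{-2}|∂_z η*|² + (|p|² - c²)|η*|² + 2(p·η*)² dV equals zero. -/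
open MeasureTheory

noncomputable section

abbrev E2 := EuclideanSpace ℝ (Fin 2)

def VDx (f : (ℝ × ℝ) × ℝ → E2) (w : (ℝ × ℝ) × ℝ) : E2 :=
  deriv (fun x => f ((x, w.1.2), w.2)) w.1.1

def VDy (f : (ℝ × ℝ) × ℝ → E2) (w : (ℝ × ℝ) × ℝ) : E2 :=
  deriv (fun y => f ((w.1.1, y), w.2)) w.1.2

def VDz (f : (ℝ × ℝ) × ℝ → E2) (w : (ℝ × ℝ) × ℝ) : E2 :=
  deriv (fun z => f (w.1, z)) w.2

def VDxx (f : (ℝ × ℝ) × ℝ → E2) (w : (ℝ × ℝ) × ℝ) : E2 :=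
  iteratedDeriv 2 (fun x => f ((x, w.1.2), w.2)) w.1.1

def VDyy (f : (ℝ × ℝ) × ℝ → E2) (w : (ℝ × ℝ) × ℝ) : E2 :=
  iteratedDeriv 2 (fun y => f ((w.1.1, y), w.2)) w.1.2

def VDzz (f : (ℝ × ℝ) × ℝ → E2) (w : (ℝ × ℝ) × ℝ) : E2 :=
  iteratedDeriv 2 (fun z => f (w.1, z)) w.2

open Set


section OneD
variable {S : Set ℝ} (hSo : IsOpen S) (hSb : Bornology.IsBounded S)

include hSb in
lemma ne_left {x : ℝ} : (Sᶜ ∩ Iic x).Nonempty := by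
  obtain ⟨m, hm⟩ := hSb.bddBelow
  refine ⟨min x (m - 1), fun hmem => ?_, mem_Iic.mpr (min_le_left _ _)⟩
  have := hm hmem
  have h2 : min x (m-1) ≤ m - 1 := min_le_right _ _
  linarith

include hSb in
lemma ne_right {x : ℝ} : (Sᶜ ∩ Ici x).Nonempty := by
  obtain ⟨M, hM⟩ := hSb.bddAbove
  refine ⟨max x (M + 1), fun hmem => ?_, mem_Ici.mpr (le_max_left _ _)⟩
  have := hM hmem
  have h2 : M + 1 ≤ max x (M+1) := le_max_right _ _
  linarith

lemma comp_subset {x : ℝ} :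
    Ioo (sSup (Sᶜ ∩ Iic x)) (sInf (Sᶜ ∩ Ici x)) ⊆ S := by
  intro t ht
  by_contra hts
  have hbA : BddAbove (Sᶜ ∩ Iic x) := ⟨x, fun y hy => hy.2⟩
  have hbB : BddBelow (Sᶜ ∩ Ici x) := ⟨x, fun y hy => hy.2⟩
  rcases le_or_gt t x with h | h
  · exact absurd (le_csSup hbA ⟨hts, h⟩) (not_le.2 ht.1)
  · exact absurd (csInf_le hbB ⟨hts, h.le⟩) (not_le.2 ht.2)

include hSo hSb in
lemma comp_mem {x : ℝ} (hx : x ∈ S) :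
    x ∈ Ioo (sSup (Sᶜ ∩ Iic x)) (sInf (Sᶜ ∩ Ici x)) := by
  obtain ⟨ε, hε, hball⟩ := Metric.isOpen_iff.1 hSo x hx
  constructor
  · have : sSup (Sᶜ ∩ Iic x) ≤ x - ε/2 := by
      apply csSup_le (ne_left hSb)
      intro y hy
      by_contra hlt
      push_neg at hlt
      have h2 : y ≤ x := hy.2
      exact hy.1 (hball (by
        rw [Metric.mem_ball, Real.dist_eq, abs_lt]
        constructor <;> linarith))
    linarith
  · have : x + ε/2 ≤ sInf (Sᶜ ∩ Ici x) := by
      apply le_csInf (ne_right hSb)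
      intro y hy
      by_contra hlt
      push_neg at hlt
      have h2 : x ≤ y := hy.2
      exact hy.1 (hball (by
        rw [Metric.mem_ball, Real.dist_eq, abs_lt]
        constructor <;> linarith))
    linarith

include hSo hSb in
lemma comp_eq {x q : ℝ} (hx : x ∈ S)
    (hq : q ∈ Ioo (sSup (Sᶜ ∩ Iic x)) (sInf (Sᶜ ∩ Ici x))) :
    sSup (Sᶜ ∩ Iic q) = sSup (Sᶜ ∩ Iic x) ∧
    sInf (Sᶜ ∩ Ici q) = sInf (Sᶜ ∩ Ici x) := by
  set a := sSup (Sᶜ ∩ Iic x) with ha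
  set b := sInf (Sᶜ ∩ Ici x) with hb
  have hsub := comp_subset (S := S) (x := x)
  have hmemx := comp_mem hSo hSb hx
  have key1 : ∀ t, t ∈ Sᶜ ∩ Iic q → t ≤ a := fun t ht => by
    by_contra hlt; push_neg at hlt
    exact ht.1 (hsub ⟨hlt, lt_of_le_of_lt ht.2 hq.2⟩)
  have key2 : ∀ t, t ∈ Sᶜ ∩ Ici q → b ≤ t := fun t ht => by
    by_contra hlt; push_neg at hlt
    exact ht.1 (hsub ⟨lt_of_lt_of_le hq.1 ht.2, hlt⟩)
  have key1' : ∀ t, t ∈ Sᶜ ∩ Iic x → t ≤ a := fun t ht => by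
    by_contra hlt; push_neg at hlt
    exact ht.1 (hsub ⟨hlt, lt_of_le_of_lt ht.2 hmemx.2⟩)
  have key2' : ∀ t, t ∈ Sᶜ ∩ Ici x → b ≤ t := fun t ht => by
    by_contra hlt; push_neg at hlt
    exact ht.1 (hsub ⟨lt_of_lt_of_le hmemx.1 ht.2, hlt⟩)
  constructor
  · apply le_antisymm (csSup_le (ne_left hSb) key1)
    apply csSup_le_csSup ⟨q, fun y hy => hy.2⟩ (ne_left hSb)
    intro t ht
    exact ⟨ht.1, mem_Iic.mpr (le_trans (key1' t ht) hq.1.le)⟩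
  · apply le_antisymm _ (le_csInf (ne_right hSb) key2)
    apply csInf_le_csInf ⟨q, fun y hy => hy.2⟩ (ne_right hSb)
    intro t ht
    exact ⟨ht.1, mem_Ici.mpr (le_trans hq.2.le (key2' t ht))⟩

end OneD

section OneDMain
open scoped Topology

lemma endpoint_frontier_left {S : Set ℝ} (hSo : IsOpen S) (hSb : Bornology.IsBounded S)
    {q : ℝ} (hq : q ∈ S) : sSup (Sᶜ ∩ Iic q) ∈ frontier S := by
  have hmem := comp_mem hSo hSb hq
  have hcl : IsClosed (Sᶜ ∩ Iic q) := hSo.isClosed_compl.inter isClosed_Iic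
  have hin : sSup (Sᶜ ∩ Iic q) ∈ Sᶜ ∩ Iic q :=
    hcl.csSup_mem (ne_left hSb) ⟨q, fun y hy => hy.2⟩
  constructor
  · have h1 : (Ioo (sSup (Sᶜ ∩ Iic q)) (sInf (Sᶜ ∩ Ici q))) ⊆ S := comp_subset
    have : sSup (Sᶜ ∩ Iic q) ∈ closure (Ioo (sSup (Sᶜ ∩ Iic q)) (sInf (Sᶜ ∩ Ici q))) := by
      rw [closure_Ioo (ne_of_lt (lt_trans hmem.1 hmem.2))]
      exact ⟨le_refl _, (lt_trans hmem.1 hmem.2).le⟩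
    exact closure_mono h1 this
  · rw [hSo.interior_eq]; exact hin.1

lemma endpoint_frontier_right {S : Set ℝ} (hSo : IsOpen S) (hSb : Bornology.IsBounded S)
    {q : ℝ} (hq : q ∈ S) : sInf (Sᶜ ∩ Ici q) ∈ frontier S := by
  have hmem := comp_mem hSo hSb hq
  have hcl : IsClosed (Sᶜ ∩ Ici q) := hSo.isClosed_compl.inter isClosed_Ici
  have hin : sInf (Sᶜ ∩ Ici q) ∈ Sᶜ ∩ Ici q :=
    hcl.csInf_mem (ne_right hSb) ⟨q, fun y hy => hy.2⟩
  constructor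
  · have h1 : (Ioo (sSup (Sᶜ ∩ Iic q)) (sInf (Sᶜ ∩ Ici q))) ⊆ S := comp_subset
    have : sInf (Sᶜ ∩ Ici q) ∈ closure (Ioo (sSup (Sᶜ ∩ Iic q)) (sInf (Sᶜ ∩ Ici q))) := by
      rw [closure_Ioo (ne_of_lt (lt_trans hmem.1 hmem.2))]
      exact ⟨(lt_trans hmem.1 hmem.2).le, le_refl _⟩
    exact closure_mono h1 this
  · rw [hSo.interior_eq]; exact hin.1

/-- Integration by parts on a bounded open subset of ℝ with vanishing boundary values. -/
lemma integral_deriv_open_zero {S : Set ℝ} (hSo : IsOpen S) (hSb : Bornology.IsBounded S)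
    {F : ℝ → ℝ} (hF : ContDiff ℝ (⊤ : ℕ∞) F) (h0 : ∀ x ∈ frontier S, F x = 0) :
    ∫ x in S, deriv F x = 0 := by
  classical
  set comp : ℝ → Set ℝ := fun q => Ioo (sSup (Sᶜ ∩ Iic q)) (sInf (Sᶜ ∩ Ici q)) with hcomp
  set T : Set (Set ℝ) := comp '' (S ∩ range ((↑) : ℚ → ℝ)) with hT
  have hTc : T.Countable := (Set.countable_range _).mono inter_subset_right |>.image _
  have hU : ⋃₀ T = S := by
    apply Subset.antisymm
    · rintro x ⟨I, ⟨q, hq, rfl⟩, hx⟩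
      exact comp_subset hx
    · intro x hx
      have hmem := comp_mem hSo hSb hx
      obtain ⟨q, hq⟩ := exists_rat_btwn (lt_trans hmem.1 hmem.2)
      have hq' : (q : ℝ) ∈ comp x := ⟨hq.1, hq.2⟩
      have hqS : (q : ℝ) ∈ S := comp_subset hq'
      have := comp_eq hSo hSb hx hq'
      refine ⟨comp q, ⟨q, ⟨hqS, mem_range_self _⟩, rfl⟩, ?_⟩
      rw [hcomp]; simp only []
      rw [this.1, this.2]; exact hmem
  have hdisj : T.Pairwise Disjoint := by
    rintro I ⟨q, hqm, rfl⟩ J ⟨r, hrm, rfl⟩ hne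
    rw [Set.disjoint_left]
    intro t htI htJ
    apply hne
    have e1 := comp_eq hSo hSb hqm.1 htI
    have e2 := comp_eq hSo hSb hrm.1 htJ
    rw [hcomp]; simp only []
    rw [← e1.1, ← e1.2, e2.1, e2.2]
  -- rewrite as iUnion over the subtype
  have hct : Countable ↥T := hTc.to_subtype
  have hmeas : ∀ i : ↥T, MeasurableSet (i : Set ℝ) := by
    rintro ⟨I, q, hq, rfl⟩; exact measurableSet_Ioo
  have hdisj' : Pairwise (Function.onFun Disjoint fun i : ↥T => (i : Set ℝ)) := by
    intro i j hij
    exact hdisj i.2 j.2 (fun h => hij (Subtype.ext h))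
  have hcont : Continuous (deriv F) := hF.continuous_deriv (by simp)
  have hint : IntegrableOn (deriv F) S := by
    apply (hcont.continuousOn.integrableOn_compact hSb.isCompact_closure).mono_set
      subset_closure
  have hUs : ⋃ i : ↥T, (i : Set ℝ) = S := by rw [← hU, sUnion_eq_iUnion]
  rw [← hUs] at hint ⊢
  rw [integral_iUnion hmeas hdisj' hint]
  have hzero : ∀ i : ↥T, ∫ x in (i : Set ℝ), deriv F x = 0 := by
    rintro ⟨I, q, hq, rfl⟩
    have hqS : q ∈ S := hq.1
    have hmem := comp_mem hSo hSb hqS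
    set a := sSup (Sᶜ ∩ Iic q)
    set b := sInf (Sᶜ ∩ Ici q)
    have hab : a < b := lt_trans hmem.1 hmem.2
    have h1 : ∫ x in Ioo a b, deriv F x = ∫ x in a..b, deriv F x := by
      rw [intervalIntegral.integral_of_le hab.le, integral_Ioc_eq_integral_Ioo]
    have h2 : ∫ x in a..b, deriv F x = F b - F a := by
      apply intervalIntegral.integral_deriv_eq_sub
      · intro x _
        exact hF.differentiable (by simp) x
      · exact (hcont.intervalIntegrable a b)
    simp only []
    rw [h1, h2, h0 b (endpoint_frontier_right hSo hSb hqS),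
      h0 a (endpoint_frontier_left hSo hSb hqS), sub_zero]
  rw [tsum_congr hzero, tsum_zero]

end OneDMain

section ThreeD

abbrev W := (ℝ × ℝ) × ℝ

/-- z-direction divergence piece integrates to zero. -/
lemma integral_dZ_zero {V : Set W} (hVo : IsOpen V) (hVb : Bornology.IsBounded V)
    (hVm : MeasurableSet V) {G : W → ℝ} (hG : ContDiff ℝ (⊤ : ℕ∞) G)
    (h0 : ∀ w ∈ frontier V, G w = 0) :
    ∫ w in V, deriv (fun z => G (w.1, z)) w.2 = 0 := by
  have hdcont : Continuous fun w : W => deriv (fun z => G (w.1, z)) w.2 := by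
    have h1 : (fun w : W => deriv (fun z => G (w.1, z)) w.2) =
        fun w : W => fderiv ℝ G w ((0, 0), 1) := by
      funext w
      have hc : HasDerivAt (fun z : ℝ => (w.1, z)) ((0 : ℝ × ℝ), (1 : ℝ)) w.2 :=
        HasDerivAt.prodMk (hasDerivAt_const w.2 w.1) (hasDerivAt_id w.2)
      have := ((hG.differentiable (by simp)) w).hasFDerivAt.comp_hasDerivAt w.2 hc
      exact this.deriv
    rw [h1]
    exact (hG.continuous_fderiv (by simp)).clm_apply continuous_const
  have hint : Integrable (V.indicator fun w : W => deriv (fun z => G (w.1, z)) w.2) := by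
    rw [integrable_indicator_iff hVm]
    exact (hdcont.continuousOn.integrableOn_compact hVb.isCompact_closure).mono_set
      subset_closure
  rw [← integral_indicator hVm]
  rw [show (volume : Measure W) = (volume : Measure (ℝ × ℝ)).prod (volume : Measure ℝ) from
    Measure.volume_eq_prod _ _] at hint ⊢
  rw [integral_prod _ hint]
  have hinner : ∀ xy : ℝ × ℝ,
      (∫ z, (V.indicator fun w : W => deriv (fun z' => G (w.1, z')) w.2) (xy, z)) = 0 := by
    intro xy
    set S : Set ℝ := {z | (xy, z) ∈ V} with hS
    have hSo : IsOpen S := hVo.preimage (by fun_prop)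
    have hSb : Bornology.IsBounded S := by
      rw [Metric.isBounded_iff_subset_ball 0] at hVb ⊢
      obtain ⟨r, hr⟩ := hVb
      refine ⟨r, fun z hz => ?_⟩
      have := hr hz
      simp only [Metric.mem_ball, dist_zero_right] at this ⊢
      exact lt_of_le_of_lt (le_trans (le_max_right _ _) le_rfl :
        ‖z‖ ≤ ‖((xy, z) : W)‖) this
    have hcongr : (fun z => (V.indicator fun w : W => deriv (fun z' => G (w.1, z')) w.2) (xy, z))
        = S.indicator (fun z => deriv (fun z' => G (xy, z')) z) := by
      funext z
      by_cases hz : (xy, z) ∈ V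
      · have hz' : z ∈ S := hz
        rw [indicator_of_mem hz, indicator_of_mem hz']
      · have hz' : z ∉ S := hz
        rw [indicator_of_notMem hz, indicator_of_notMem hz']
    have heq : (∫ z, (V.indicator fun w : W => deriv (fun z' => G (w.1, z')) w.2) (xy, z))
        = ∫ z in S, deriv (fun z' => G (xy, z')) z := by
      rw [← integral_indicator hSo.measurableSet]
      exact congrArg (integral volume) hcongr
    rw [heq]
    apply integral_deriv_open_zero hSo hSb (hG.comp (by fun_prop))
    intro z hz
    apply h0
    have hcl : z ∈ closure S := hz.1
    have h1 : (xy, z) ∈ closure V := by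
      have : Continuous fun z : ℝ => ((xy, z) : W) := by fun_prop
      exact this.closure_preimage_subset V hcl
    have h2 : (xy, z) ∉ V := fun hmem => hz.2 (by rw [hSo.interior_eq]; exact hmem)
    rw [frontier, hVo.interior_eq]
    exact ⟨h1, h2⟩
  simp only [hinner, integral_zero]

end ThreeD

section Perm

lemma norm_W_lt {w : W} {r : ℝ} (h : max (max ‖w.1.1‖ ‖w.1.2‖) ‖w.2‖ < r) :
    ‖w‖ < r := by
  have : ‖w‖ = max (max ‖w.1.1‖ ‖w.1.2‖) ‖w.2‖ := rfl
  rwa [this]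

lemma norm_W_lt' {w : W} {r : ℝ} (h : ‖w‖ < r) :
    max (max ‖w.1.1‖ ‖w.1.2‖) ‖w.2‖ < r := h

lemma integral_dX_zero {V : Set W} (hVo : IsOpen V) (hVb : Bornology.IsBounded V)
    (hVm : MeasurableSet V) {G : W → ℝ} (hG : ContDiff ℝ (⊤ : ℕ∞) G)
    (h0 : ∀ w ∈ frontier V, G w = 0) :
    ∫ w in V, deriv (fun x => G ((x, w.1.2), w.2)) w.1.1 = 0 := by
  -- e : ((y,z),x) ↦ ((x,y),z)
  set e : W ≃ᵐ W :=
    (MeasurableEquiv.prodComm : ((ℝ × ℝ) × ℝ) ≃ᵐ (ℝ × (ℝ × ℝ))).trans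
      (MeasurableEquiv.prodAssoc :
        ((ℝ × ℝ) × ℝ) ≃ᵐ (ℝ × (ℝ × ℝ))).symm with he
  have hecoe : ⇑e = fun w : W => ((((w.2, w.1.1), w.1.2)) : W) := rfl
  have hsymmcoe : ⇑e.symm = fun w : W => ((((w.1.2, w.2), w.1.1)) : W) := rfl
  have hmp : MeasurePreserving (⇑e) := by
    have h1 : MeasurePreserving
        (⇑(MeasurableEquiv.prodAssoc : ((ℝ × ℝ) × ℝ) ≃ᵐ (ℝ × (ℝ × ℝ))).symm)
        (volume : Measure (ℝ × (ℝ × ℝ))) (volume : Measure W) :=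
      (measurePreserving_prodAssoc volume volume volume).symm MeasurableEquiv.prodAssoc
    have h2 : MeasurePreserving (Prod.swap : W → ℝ × (ℝ × ℝ))
        (volume : Measure W) (volume : Measure (ℝ × (ℝ × ℝ))) :=
      Measure.measurePreserving_swap
    exact h1.comp h2
  have hecont : Continuous (⇑e) := by rw [hecoe]; fun_prop
  have hicont : Continuous (⇑e.symm) := by rw [hsymmcoe]; fun_prop
  set H : W ≃ₜ W := { e.toEquiv with continuous_toFun := hecont, continuous_invFun := hicont }
    with hH
  have hHcoe : ⇑H = ⇑e := rfl
  set V' : Set W := ⇑e ⁻¹' V with hV'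
  have hV'o : IsOpen V' := hVo.preimage hecont
  have hV'm : MeasurableSet V' := hVm.preimage e.measurable
  have hV'b : Bornology.IsBounded V' := by
    rw [Metric.isBounded_iff_subset_ball 0] at hVb ⊢
    obtain ⟨r, hr⟩ := hVb
    refine ⟨r, fun w hw => ?_⟩
    have h1 := hr hw
    simp only [Metric.mem_ball, dist_zero_right] at h1 ⊢
    apply norm_W_lt
    have h2 := norm_W_lt' h1
    rw [hecoe] at h2
    simp only [max_lt_iff] at h2 ⊢
    tauto
  have hG' : ContDiff ℝ (⊤ : ℕ∞) (G ∘ ⇑e) := hG.comp (by rw [hecoe]; fun_prop)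
  have h0' : ∀ w ∈ frontier V', (G ∘ ⇑e) w = 0 := by
    intro w hw
    apply h0
    have hfr : frontier V' = ⇑e ⁻¹' frontier V := (H.preimage_frontier V).symm
    rw [hfr] at hw
    exact hw
  have key := integral_dZ_zero hV'o hV'b hV'm hG' h0'
  have heq : (∫ w in V', deriv (fun z => (G ∘ ⇑e) (w.1, z)) w.2)
      = ∫ w in V', (fun w : W => deriv (fun x => G ((x, w.1.2), w.2)) w.1.1) (e w) := rfl
  rw [heq] at key
  rwa [hmp.setIntegral_preimage_emb e.measurableEmbedding
    (fun w : W => deriv (fun x => G ((x, w.1.2), w.2)) w.1.1) V] at key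

lemma integral_dY_zero {V : Set W} (hVo : IsOpen V) (hVb : Bornology.IsBounded V)
    (hVm : MeasurableSet V) {G : W → ℝ} (hG : ContDiff ℝ (⊤ : ℕ∞) G)
    (h0 : ∀ w ∈ frontier V, G w = 0) :
    ∫ w in V, deriv (fun y => G ((w.1.1, y), w.2)) w.1.2 = 0 := by
  -- e : ((x,z),y) ↦ ((x,y),z)
  set e : W ≃ᵐ W :=
    ((MeasurableEquiv.prodAssoc : ((ℝ × ℝ) × ℝ) ≃ᵐ (ℝ × (ℝ × ℝ))).trans
      ((MeasurableEquiv.refl ℝ).prodCongr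
        (MeasurableEquiv.prodComm : (ℝ × ℝ) ≃ᵐ (ℝ × ℝ)))).trans
      (MeasurableEquiv.prodAssoc : ((ℝ × ℝ) × ℝ) ≃ᵐ (ℝ × (ℝ × ℝ))).symm with he
  have hecoe : ⇑e = fun w : W => ((((w.1.1, w.2), w.1.2)) : W) := rfl
  have hsymmcoe : ⇑e.symm = fun w : W => ((((w.1.1, w.2), w.1.2)) : W) := rfl
  have hmp : MeasurePreserving (⇑e) := by
    have h1 : MeasurePreserving
        (⇑(MeasurableEquiv.prodAssoc : ((ℝ × ℝ) × ℝ) ≃ᵐ (ℝ × (ℝ × ℝ))).symm)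
        (volume : Measure (ℝ × (ℝ × ℝ))) (volume : Measure W) :=
      (measurePreserving_prodAssoc volume volume volume).symm MeasurableEquiv.prodAssoc
    have h2 : MeasurePreserving
        (⇑(MeasurableEquiv.prodAssoc : ((ℝ × ℝ) × ℝ) ≃ᵐ (ℝ × (ℝ × ℝ))))
        (volume : Measure W) (volume : Measure (ℝ × (ℝ × ℝ))) :=
      measurePreserving_prodAssoc volume volume volume
    have h3 : MeasurePreserving
        (Prod.map (id : ℝ → ℝ) (Prod.swap : ℝ × ℝ → ℝ × ℝ))
        (volume : Measure (ℝ × (ℝ × ℝ))) (volume : Measure (ℝ × (ℝ × ℝ))) :=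
      (MeasurePreserving.id volume).prod Measure.measurePreserving_swap
    exact (h1.comp h3).comp h2
  have hecont : Continuous (⇑e) := by rw [hecoe]; fun_prop
  have hicont : Continuous (⇑e.symm) := by rw [hsymmcoe]; fun_prop
  set H : W ≃ₜ W := { e.toEquiv with continuous_toFun := hecont, continuous_invFun := hicont }
    with hH
  set V' : Set W := ⇑e ⁻¹' V with hV'
  have hV'o : IsOpen V' := hVo.preimage hecont
  have hV'm : MeasurableSet V' := hVm.preimage e.measurable
  have hV'b : Bornology.IsBounded V' := by
    rw [Metric.isBounded_iff_subset_ball 0] at hVb ⊢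
    obtain ⟨r, hr⟩ := hVb
    refine ⟨r, fun w hw => ?_⟩
    have h1 := hr hw
    simp only [Metric.mem_ball, dist_zero_right] at h1 ⊢
    apply norm_W_lt
    have h2 := norm_W_lt' h1
    rw [hecoe] at h2
    simp only [max_lt_iff] at h2 ⊢
    tauto
  have hG' : ContDiff ℝ (⊤ : ℕ∞) (G ∘ ⇑e) := hG.comp (by rw [hecoe]; fun_prop)
  have h0' : ∀ w ∈ frontier V', (G ∘ ⇑e) w = 0 := by
    intro w hw
    apply h0
    have hfr : frontier V' = ⇑e ⁻¹' frontier V := (H.preimage_frontier V).symm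
    rw [hfr] at hw
    exact hw
  have key := integral_dZ_zero hV'o hV'b hV'm hG' h0'
  have heq : (∫ w in V', deriv (fun z => (G ∘ ⇑e) (w.1, z)) w.2)
      = ∫ w in V', (fun w : W => deriv (fun y => G ((w.1.1, y), w.2)) w.1.2) (e w) := rfl
  rw [heq] at key
  rwa [hmp.setIntegral_preimage_emb e.measurableEmbedding
    (fun w : W => deriv (fun y => G ((w.1.1, y), w.2)) w.1.2) V] at key

end Perm

section Calc

variable {F : Type*} [NormedAddCommGroup F] [NormedSpace ℝ F]

def dirD (f : W → F) (v : W) (w : W) : F := fderiv ℝ f w v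

def eX : W := ((1, 0), 0)
def eY : W := ((0, 1), 0)
def eZ : W := ((0, 0), 1)

lemma hasDerivAt_sliceX (f : W → F) (hf : Differentiable ℝ f) (y z t : ℝ) :
    HasDerivAt (fun x => f ((x, y), z)) (dirD f eX ((t, y), z)) t := by
  have hc : HasDerivAt (fun x : ℝ => (((x, y), z) : W)) eX t :=
    HasDerivAt.prodMk (HasDerivAt.prodMk (hasDerivAt_id t) (hasDerivAt_const t y)) (hasDerivAt_const t z)
  exact (hf _).hasFDerivAt.comp_hasDerivAt t hc

lemma hasDerivAt_sliceY (f : W → F) (hf : Differentiable ℝ f) (x z t : ℝ) :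
    HasDerivAt (fun y => f ((x, y), z)) (dirD f eY ((x, t), z)) t := by
  have hc : HasDerivAt (fun y : ℝ => (((x, y), z) : W)) eY t :=
    HasDerivAt.prodMk (HasDerivAt.prodMk (hasDerivAt_const t x) (hasDerivAt_id t)) (hasDerivAt_const t z)
  exact (hf _).hasFDerivAt.comp_hasDerivAt t hc

lemma hasDerivAt_sliceZ (f : W → F) (hf : Differentiable ℝ f) (x y t : ℝ) :
    HasDerivAt (fun z => f ((x, y), z)) (dirD f eZ ((x, y), t)) t := by
  have hc : HasDerivAt (fun z : ℝ => (((x, y), z) : W)) eZ t :=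
    HasDerivAt.prodMk (HasDerivAt.prodMk (hasDerivAt_const t x) (hasDerivAt_const t y)) (hasDerivAt_id t)
  exact (hf _).hasFDerivAt.comp_hasDerivAt t hc

lemma contDiff_dirD (f : W → F) (hf : ContDiff ℝ (⊤ : ℕ∞) f) (v : W) :
    ContDiff ℝ (⊤ : ℕ∞) (dirD f v) :=
  (hf.fderiv_right (by simp)).clm_apply contDiff_const

lemma dirD_swap (f : W → F) (hf : ContDiff ℝ (⊤ : ℕ∞) f) (u v w : W) :
    dirD (dirD f u) v w = dirD (dirD f v) u w := by
  have hdf : Differentiable ℝ (fderiv ℝ f) :=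
    (hf.fderiv_right (m := (⊤ : ℕ∞)) (by simp)).differentiable (by simp)
  have key : ∀ (a b : W) (w' : W),
      fderiv ℝ (fun w'' => fderiv ℝ f w'' a) w' b = fderiv ℝ (fderiv ℝ f) w' b a := by
    intro a b w'
    have h1 : HasFDerivAt (fun w'' => fderiv ℝ f w'' a)
        ((ContinuousLinearMap.apply ℝ F a).comp (fderiv ℝ (fderiv ℝ f) w')) w' :=
      (ContinuousLinearMap.apply ℝ F a).hasFDerivAt.comp w' (hdf w').hasFDerivAt
    rw [h1.fderiv]; rfl
  have hsymm : IsSymmSndFDerivAt ℝ f w := (hf.contDiffAt).isSymmSndFDerivAt (by rw [minSmoothness_of_isRCLikeNormedField]; exact WithTop.coe_le_coe.mpr le_top)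
  unfold dirD
  rw [key, key, hsymm.eq]

-- E2-valued specializations relating VD to dirD
lemma VDx_eq (f : W → E2) (hf : Differentiable ℝ f) : VDx f = dirD f eX :=
  funext fun w => (hasDerivAt_sliceX f hf w.1.2 w.2 w.1.1).deriv

lemma VDy_eq (f : W → E2) (hf : Differentiable ℝ f) : VDy f = dirD f eY :=
  funext fun w => (hasDerivAt_sliceY f hf w.1.1 w.2 w.1.2).deriv

lemma VDz_eq (f : W → E2) (hf : Differentiable ℝ f) : VDz f = dirD f eZ :=
  funext fun w => (hasDerivAt_sliceZ f hf w.1.1 w.1.2 w.2).deriv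

lemma VDxx_eq (f : W → E2) (w : W) : VDxx f w = VDx (VDx f) w := by
  show iteratedDeriv 2 _ _ = _
  rw [iteratedDeriv_succ, iteratedDeriv_one]
  rfl

lemma VDyy_eq (f : W → E2) (w : W) : VDyy f w = VDy (VDy f) w := by
  show iteratedDeriv 2 _ _ = _
  rw [iteratedDeriv_succ, iteratedDeriv_one]
  rfl

lemma VDzz_eq (f : W → E2) (w : W) : VDzz f w = VDz (VDz f) w := by
  show iteratedDeriv 2 _ _ = _
  rw [iteratedDeriv_succ, iteratedDeriv_one]
  rfl

end Calc

noncomputable section Part1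

open RealInnerProductSpace

lemma part1 (lam c : ℝ) (p : W → E2) (hp : ContDiff ℝ (⊤ : ℕ∞) p) (V : Set W) (hVo : IsOpen V)
    (hPDE : ∀ w ∈ V,
      VDxx p w + VDyy p w + (lam ^ (-2 : ℤ)) • VDzz p w = (‖p w‖ ^ 2 - c ^ 2) • p w)
    (w : W) (hw : w ∈ V) :
    VDxx (VDz p) w + VDyy (VDz p) w + (lam ^ (-2 : ℤ)) • VDzz (VDz p) w =
      (‖p w‖ ^ 2 - c ^ 2) • VDz p w + (2 * (⟪p w, VDz p w⟫ : ℝ)) • p w := by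
  have hd : Differentiable ℝ p := hp.differentiable (by simp)
  set η : W → E2 := dirD p eZ with hηdef
  have hηc : ContDiff ℝ (⊤ : ℕ∞) η := contDiff_dirD p hp eZ
  have hVDzp : VDz p = η := VDz_eq p hd
  -- second-derivative rewriting helper
  have hdd : ∀ (f : W → E2) (hf : ContDiff ℝ (⊤ : ℕ∞) f) (w' : W),
      VDxx f w' = dirD (dirD f eX) eX w' ∧ VDyy f w' = dirD (dirD f eY) eY w' ∧
      VDzz f w' = dirD (dirD f eZ) eZ w' := by
    intro f hf w'
    have h1 : VDx f = dirD f eX := VDx_eq f (hf.differentiable (by simp))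
    have h2 : VDy f = dirD f eY := VDy_eq f (hf.differentiable (by simp))
    have h3 : VDz f = dirD f eZ := VDz_eq f (hf.differentiable (by simp))
    refine ⟨?_, ?_, ?_⟩
    · rw [VDxx_eq, h1, VDx_eq _ ((contDiff_dirD f hf eX).differentiable (by simp))]
    · rw [VDyy_eq, h2, VDy_eq _ ((contDiff_dirD f hf eY).differentiable (by simp))]
    · rw [VDzz_eq, h3, VDz_eq _ ((contDiff_dirD f hf eZ).differentiable (by simp))]
  set A : W → E2 := dirD (dirD p eX) eX with hA
  set B : W → E2 := dirD (dirD p eY) eY with hB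
  set C : W → E2 := dirD (dirD p eZ) eZ with hC
  set D : W → E2 := fun w' => (⟪p w', p w'⟫ - c ^ 2) • p w' with hD
  set Φ : W → E2 := fun w' => A w' + B w' + (lam ^ (-2 : ℤ)) • C w' - D w' with hΦ
  have hΦ0 : ∀ w' ∈ V, Φ w' = 0 := by
    intro w' hw'
    have hpde := hPDE w' hw'
    obtain ⟨e1, e2, e3⟩ := hdd p hp w'
    rw [e1, e2, e3] at hpde
    have : D w' = (‖p w'‖ ^ 2 - c ^ 2) • p w' := by
      rw [hD]; simp only []; rw [real_inner_self_eq_norm_sq]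
    rw [hΦ]; simp only []
    rw [this, sub_eq_zero]
    exact hpde
  have hev : Φ =ᶠ[nhds w] (fun _ => (0 : E2)) :=
    Filter.eventually_of_mem (hVo.mem_nhds hw) hΦ0
  have hfd0 : fderiv ℝ Φ w = 0 := by
    rw [hev.fderiv_eq, fderiv_const_apply]
  -- HasFDerivAt pieces
  have hAc : ContDiff ℝ (⊤ : ℕ∞) A := contDiff_dirD _ (contDiff_dirD p hp eX) eX
  have hBc : ContDiff ℝ (⊤ : ℕ∞) B := contDiff_dirD _ (contDiff_dirD p hp eY) eY
  have hCc : ContDiff ℝ (⊤ : ℕ∞) C := contDiff_dirD _ (contDiff_dirD p hp eZ) eZ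
  have hA' : HasFDerivAt A (fderiv ℝ A w) w := (hAc.differentiable (by simp) w).hasFDerivAt
  have hB' : HasFDerivAt B (fderiv ℝ B w) w := (hBc.differentiable (by simp) w).hasFDerivAt
  have hC' : HasFDerivAt C (fderiv ℝ C w) w := (hCc.differentiable (by simp) w).hasFDerivAt
  have hp' : HasFDerivAt p (fderiv ℝ p w) w := (hd w).hasFDerivAt
  have hq : HasFDerivAt (fun w' => (⟪p w', p w'⟫ : ℝ))
      ((fderivInnerCLM ℝ (p w, p w)).comp ((fderiv ℝ p w).prod (fderiv ℝ p w))) w :=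
    hp'.inner ℝ hp'
  have hs : HasFDerivAt (fun w' => (⟪p w', p w'⟫ : ℝ) - c ^ 2)
      ((fderivInnerCLM ℝ (p w, p w)).comp ((fderiv ℝ p w).prod (fderiv ℝ p w))) w :=
    hq.sub_const _
  have hD' : HasFDerivAt D
      ((⟪p w, p w⟫ - c ^ 2) • fderiv ℝ p w +
        ((fderivInnerCLM ℝ (p w, p w)).comp
          ((fderiv ℝ p w).prod (fderiv ℝ p w))).smulRight (p w)) w := hs.smul hp'
  have hΦ' : HasFDerivAt Φ
      (fderiv ℝ A w + fderiv ℝ B w + (lam ^ (-2 : ℤ)) • fderiv ℝ C w -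
        ((⟪p w, p w⟫ - c ^ 2) • fderiv ℝ p w +
          ((fderivInnerCLM ℝ (p w, p w)).comp
            ((fderiv ℝ p w).prod (fderiv ℝ p w))).smulRight (p w))) w :=
    ((hA'.add hB').add (hC'.const_smul (lam ^ (-2 : ℤ)))).sub hD'
  have hkey := hΦ'.fderiv
  rw [hfd0] at hkey
  have hz := congrArg (fun (L : W →L[ℝ] E2) => L eZ) hkey
  simp only [ContinuousLinearMap.zero_apply, ContinuousLinearMap.sub_apply,
    ContinuousLinearMap.add_apply, ContinuousLinearMap.smul_apply,
    ContinuousLinearMap.smulRight_apply, ContinuousLinearMap.comp_apply,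
    ContinuousLinearMap.prod_apply, fderivInnerCLM_apply] at hz
  have s1 : (fderiv ℝ A w) eZ = dirD (dirD η eX) eX w := by
    have h1 : (fderiv ℝ A w) eZ = dirD (dirD (dirD p eX) eX) eZ w := rfl
    rw [h1, dirD_swap (dirD p eX) (contDiff_dirD p hp eX) eX eZ w,
      show dirD (dirD p eX) eZ = dirD η eX from funext (dirD_swap p hp eX eZ)]
  have s2 : (fderiv ℝ B w) eZ = dirD (dirD η eY) eY w := by
    have h1 : (fderiv ℝ B w) eZ = dirD (dirD (dirD p eY) eY) eZ w := rfl
    rw [h1, dirD_swap (dirD p eY) (contDiff_dirD p hp eY) eY eZ w,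
      show dirD (dirD p eY) eZ = dirD η eY from funext (dirD_swap p hp eY eZ)]
  have s3 : (fderiv ℝ C w) eZ = dirD (dirD η eZ) eZ w := rfl
  have e1 : (fderiv ℝ p w) eZ = η w := rfl
  rw [s1, s2, s3, e1] at hz
  have h2 : (⟪p w, p w⟫ : ℝ) - c ^ 2 = ‖p w‖ ^ 2 - c ^ 2 := by
    rw [real_inner_self_eq_norm_sq]
  have h3 : (⟪p w, η w⟫ + ⟪η w, p w⟫ : ℝ) = 2 * ⟪p w, η w⟫ := by
    rw [real_inner_comm (η w)]; ring
  rw [h2, h3] at hz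
  obtain ⟨f1, f2, f3⟩ := hdd η hηc w
  rw [hVDzp, f1, f2, f3]
  exact sub_eq_zero.mp hz.symm

end Part1

noncomputable section Part2
open RealInnerProductSpace

lemma dslice_x (η : W → E2) (hη : ContDiff ℝ (⊤ : ℕ∞) η) (w : W) :
    deriv (fun x => (⟪η ((x, w.1.2), w.2), dirD η eX ((x, w.1.2), w.2)⟫ : ℝ)) w.1.1
      = ‖VDx η w‖ ^ 2 + ⟪η w, VDxx η w⟫ := by
  set u : ℝ → E2 := fun x => η ((x, w.1.2), w.2) with hu
  have huc : ContDiff ℝ (⊤ : ℕ∞) u := hη.comp (by fun_prop)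
  have hduc : ContDiff ℝ (⊤ : ℕ∞) (deriv u) := by
    have : deriv u = fun x => fderiv ℝ u x 1 := funext fun x => rfl
    rw [this]; exact (huc.fderiv_right (by simp)).clm_apply contDiff_const
  have h1 : HasDerivAt u (deriv u w.1.1) w.1.1 :=
    ((huc.differentiable (by simp)) w.1.1).hasDerivAt
  have h2 : HasDerivAt (deriv u) (deriv (deriv u) w.1.1) w.1.1 :=
    ((hduc.differentiable (by simp)) w.1.1).hasDerivAt
  have h3 := h1.inner ℝ h2
  have hfun : (fun x => (⟪η ((x, w.1.2), w.2), dirD η eX ((x, w.1.2), w.2)⟫ : ℝ))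
      = fun x => (⟪u x, deriv u x⟫ : ℝ) := by
    funext x
    rw [(hasDerivAt_sliceX η (hη.differentiable (by simp)) w.1.2 w.2 x).deriv]
  rw [hfun, h3.deriv]
  have e2 : deriv (deriv u) w.1.1 = VDxx η w := by rw [VDxx_eq]; rfl
  have e1 : deriv u w.1.1 = VDx η w := rfl
  rw [e1, e2, real_inner_self_eq_norm_sq]
  exact add_comm _ _

lemma dslice_y (η : W → E2) (hη : ContDiff ℝ (⊤ : ℕ∞) η) (w : W) :
    deriv (fun y => (⟪η ((w.1.1, y), w.2), dirD η eY ((w.1.1, y), w.2)⟫ : ℝ)) w.1.2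
      = ‖VDy η w‖ ^ 2 + ⟪η w, VDyy η w⟫ := by
  set u : ℝ → E2 := fun y => η ((w.1.1, y), w.2) with hu
  have huc : ContDiff ℝ (⊤ : ℕ∞) u := hη.comp (by fun_prop)
  have hduc : ContDiff ℝ (⊤ : ℕ∞) (deriv u) := by
    have : deriv u = fun x => fderiv ℝ u x 1 := funext fun x => rfl
    rw [this]; exact (huc.fderiv_right (by simp)).clm_apply contDiff_const
  have h1 : HasDerivAt u (deriv u w.1.2) w.1.2 :=
    ((huc.differentiable (by simp)) w.1.2).hasDerivAt
  have h2 : HasDerivAt (deriv u) (deriv (deriv u) w.1.2) w.1.2 :=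
    ((hduc.differentiable (by simp)) w.1.2).hasDerivAt
  have h3 := h1.inner ℝ h2
  have hfun : (fun y => (⟪η ((w.1.1, y), w.2), dirD η eY ((w.1.1, y), w.2)⟫ : ℝ))
      = fun y => (⟪u y, deriv u y⟫ : ℝ) := by
    funext y
    rw [(hasDerivAt_sliceY η (hη.differentiable (by simp)) w.1.1 w.2 y).deriv]
  rw [hfun, h3.deriv]
  have e2 : deriv (deriv u) w.1.2 = VDyy η w := by rw [VDyy_eq]; rfl
  have e1 : deriv u w.1.2 = VDy η w := rfl
  rw [e1, e2, real_inner_self_eq_norm_sq]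
  exact add_comm _ _

lemma dslice_z (η : W → E2) (hη : ContDiff ℝ (⊤ : ℕ∞) η) (w : W) :
    deriv (fun z => (⟪η (w.1, z), dirD η eZ (w.1, z)⟫ : ℝ)) w.2
      = ‖VDz η w‖ ^ 2 + ⟪η w, VDzz η w⟫ := by
  set u : ℝ → E2 := fun z => η (w.1, z) with hu
  have huc : ContDiff ℝ (⊤ : ℕ∞) u := hη.comp (by fun_prop)
  have hduc : ContDiff ℝ (⊤ : ℕ∞) (deriv u) := by
    have : deriv u = fun x => fderiv ℝ u x 1 := funext fun x => rfl
    rw [this]; exact (huc.fderiv_right (by simp)).clm_apply contDiff_const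
  have h1 : HasDerivAt u (deriv u w.2) w.2 :=
    ((huc.differentiable (by simp)) w.2).hasDerivAt
  have h2 : HasDerivAt (deriv u) (deriv (deriv u) w.2) w.2 :=
    ((hduc.differentiable (by simp)) w.2).hasDerivAt
  have h3 := h1.inner ℝ h2
  have hfun : (fun z => (⟪η (w.1, z), dirD η eZ (w.1, z)⟫ : ℝ))
      = fun z => (⟪u z, deriv u z⟫ : ℝ) := by
    funext z
    rw [(hasDerivAt_sliceZ η (hη.differentiable (by simp)) w.1.1 w.1.2 z).deriv]
  rw [hfun, h3.deriv]
  have e2 : deriv (deriv u) w.2 = VDzz η w := by rw [VDzz_eq]; rfl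
  have e1 : deriv u w.2 = VDz η w := rfl
  rw [e1, e2, real_inner_self_eq_norm_sq]
  exact add_comm _ _

end Part2


noncomputable section Main
open RealInnerProductSpace

/-- if p solves the reduced LdG system on V = E × (-h,h) and ∂_z p
vanishes on ∂V, then η* = ∂_z p solves the linearized equation and the second
variation evaluated at η* is zero. -/
theorem stmt14 (E : Set (ℝ × ℝ)) (hEo : IsOpen E) (hEm : MeasurableSet E)
    (hEb : Bornology.IsBounded E) (lam h c : ℝ) (hlam : 0 < lam) (hh : 0 < h)
    (p : (ℝ × ℝ) × ℝ → E2) (hp : ContDiff ℝ (⊤ : ℕ∞) p)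
    (V : Set ((ℝ × ℝ) × ℝ)) (hV : V = E ×ˢ Set.Ioo (-h) h)
    (hPDE : ∀ w ∈ V,
      VDxx p w + VDyy p w + (lam ^ (-2 : ℤ)) • VDzz p w =
        (‖p w‖ ^ 2 - c ^ 2) • p w)
    (hbd : ∀ w ∈ frontier V, VDz p w = 0)
    (η : (ℝ × ℝ) × ℝ → E2) (hη : η = VDz p) :
    (∀ w ∈ V,
      VDxx η w + VDyy η w + (lam ^ (-2 : ℤ)) • VDzz η w =
        (‖p w‖ ^ 2 - c ^ 2) • η w + (2 * (inner ℝ (p w) (η w) : ℝ)) • p w) ∧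
    (∫ w in V, (‖VDx η w‖ ^ 2 + ‖VDy η w‖ ^ 2 + lam ^ (-2 : ℤ) * ‖VDz η w‖ ^ 2
        + (‖p w‖ ^ 2 - c ^ 2) * ‖η w‖ ^ 2 + 2 * (inner ℝ (p w) (η w) : ℝ) ^ 2)) = 0 := by
  subst hη
  have hVo : IsOpen V := hV ▸ (hEo.prod isOpen_Ioo)
  have hVb : Bornology.IsBounded V := hV ▸ (hEb.prod (Metric.isBounded_Ioo _ _))
  have hVm : MeasurableSet V := hV ▸ (hEm.prod measurableSet_Ioo)
  have hd : Differentiable ℝ p := hp.differentiable (by simp)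
  have hηe : VDz p = dirD p eZ := VDz_eq p hd
  have hηs : ContDiff ℝ (⊤ : ℕ∞) (VDz p) := hηe ▸ contDiff_dirD p hp eZ
  refine ⟨fun w hw => part1 lam c p hp V hVo hPDE w hw, ?_⟩
  -- boundary vanishing for the three flux functions
  set Gx : W → ℝ := fun w => (⟪VDz p w, dirD (VDz p) eX w⟫ : ℝ) with hGxdef
  set Gy : W → ℝ := fun w => (⟪VDz p w, dirD (VDz p) eY w⟫ : ℝ) with hGydef
  set Gz : W → ℝ := fun w => (⟪VDz p w, dirD (VDz p) eZ w⟫ : ℝ) with hGzdef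
  have hGx : ContDiff ℝ (⊤ : ℕ∞) Gx := hηs.inner ℝ (contDiff_dirD _ hηs eX)
  have hGy : ContDiff ℝ (⊤ : ℕ∞) Gy := hηs.inner ℝ (contDiff_dirD _ hηs eY)
  have hGz : ContDiff ℝ (⊤ : ℕ∞) Gz := hηs.inner ℝ (contDiff_dirD _ hηs eZ)
  have hfrx : ∀ w ∈ frontier V, Gx w = 0 := by
    intro w hw; rw [hGxdef]; simp only []; rw [hbd w hw, inner_zero_left]
  have hfry : ∀ w ∈ frontier V, Gy w = 0 := by
    intro w hw; rw [hGydef]; simp only []; rw [hbd w hw, inner_zero_left]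
  have hfrz : ∀ w ∈ frontier V, Gz w = 0 := by
    intro w hw; rw [hGzdef]; simp only []; rw [hbd w hw, inner_zero_left]
  set F1 : W → ℝ := fun w => deriv (fun x => Gx ((x, w.1.2), w.2)) w.1.1 with hF1def
  set F2 : W → ℝ := fun w => deriv (fun y => Gy ((w.1.1, y), w.2)) w.1.2 with hF2def
  set F3 : W → ℝ := fun w => deriv (fun z => Gz (w.1, z)) w.2 with hF3def
  -- pointwise identity on V
  have hpoint : Set.EqOn
      (fun w => ‖VDx (VDz p) w‖ ^ 2 + ‖VDy (VDz p) w‖ ^ 2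
        + lam ^ (-2 : ℤ) * ‖VDz (VDz p) w‖ ^ 2
        + (‖p w‖ ^ 2 - c ^ 2) * ‖VDz p w‖ ^ 2
        + 2 * (inner ℝ (p w) (VDz p w) : ℝ) ^ 2)
      (fun w => F1 w + F2 w + lam ^ (-2 : ℤ) * F3 w) V := by
    intro w hw
    simp only [hF1def, hF2def, hF3def, hGxdef, hGydef, hGzdef]
    rw [show (fun x => (⟪VDz p ((x, w.1.2), w.2), dirD (VDz p) eX ((x, w.1.2), w.2)⟫ : ℝ))
        = fun x => (⟪VDz p ((x, w.1.2), w.2), dirD (VDz p) eX ((x, w.1.2), w.2)⟫ : ℝ) from rfl]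
    rw [dslice_x (VDz p) hηs w, dslice_y (VDz p) hηs w, dslice_z (VDz p) hηs w]
    have hlin := part1 lam c p hp V hVo hPDE w hw
    have hip := congrArg (fun v : E2 => (⟪VDz p w, v⟫ : ℝ)) hlin
    simp only [inner_add_right, real_inner_smul_right] at hip
    have h5 : (⟪VDz p w, VDz p w⟫ : ℝ) = ‖VDz p w‖ ^ 2 := real_inner_self_eq_norm_sq _
    have h6 : (⟪VDz p w, p w⟫ : ℝ) = ⟪p w, VDz p w⟫ := real_inner_comm _ _
    rw [h5, h6] at hip
    linear_combination -hip
  rw [setIntegral_congr_fun hVm hpoint]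
  -- integrability
  have hIOn : ∀ (f : W → ℝ), Continuous f → IntegrableOn f V := fun f hf =>
    (hf.continuousOn.integrableOn_compact hVb.isCompact_closure).mono_set subset_closure
  have hF1e : F1 = dirD Gx eX :=
    funext fun w => (hasDerivAt_sliceX Gx (hGx.differentiable (by simp)) w.1.2 w.2 w.1.1).deriv
  have hF2e : F2 = dirD Gy eY :=
    funext fun w => (hasDerivAt_sliceY Gy (hGy.differentiable (by simp)) w.1.1 w.2 w.1.2).deriv
  have hF3e : F3 = dirD Gz eZ :=
    funext fun w => (hasDerivAt_sliceZ Gz (hGz.differentiable (by simp)) w.1.1 w.1.2 w.2).deriv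
  have hI1 : IntegrableOn F1 V := hF1e ▸ hIOn _ (contDiff_dirD Gx hGx eX).continuous
  have hI2 : IntegrableOn F2 V := hF2e ▸ hIOn _ (contDiff_dirD Gy hGy eY).continuous
  have hI3 : IntegrableOn F3 V := hF3e ▸ hIOn _ (contDiff_dirD Gz hGz eZ).continuous
  have hI12 : IntegrableOn (fun w => F1 w + F2 w) V := hI1.add hI2
  have hI3' : IntegrableOn (fun w => lam ^ (-2 : ℤ) * F3 w) V := hI3.const_mul _
  rw [integral_add hI12 hI3', integral_add hI1 hI2, integral_const_mul]
  have hz1 : ∫ w in V, F1 w = 0 := integral_dX_zero hVo hVb hVm hGx hfrx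
  have hz2 : ∫ w in V, F2 w = 0 := integral_dY_zero hVo hVb hVm hGy hfry
  have hz3 : ∫ w in V, F3 w = 0 := integral_dZ_zero hVo hVb hVm hGz hfrz
  rw [hz1, hz2, hz3]
  ring

end Main

end
end
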